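/- Let H be a Hopf algebra with invertible antipode, δ : H → ℂ a character and σ ∈ H a group-like element; make ℂ a right H-module via δ and a left H-comodule via σ. Then ^σℂ_δ is a stable right-left anti-Yetter-Drinfeld module over H if and only if (δ,σ) is a modular pair in involution. -/

import Mathlib

/-!
Statement 2: Let `H` be a Hopf algebra (over `ℂ`) with invertible antipode,
`δ : H → ℂ` a character and `σ ∈ H` a group-like element; make `ℂ` a right
`H`-module via `δ` and a left `H`-comodule via `σ`.  Then `^σℂ_δ` is a stable
right-left anti-Yetter-Drinfeld module over `H` if and only if `(δ, σ)` is a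
modular pair in involution.
-/

open TensorProduct

noncomputable section

variable {H : Type*} [Ring H] [HopfAlgebra ℂ H]

/-- A group-like element of a Hopf algebra: `Δ(σ) = σ ⊗ σ` and `ε(σ) = 1`. -/
def IsGroupLike (σ : H) : Prop :=
  Coalgebra.counit (R := ℂ) σ = 1 ∧ Coalgebra.comul (R := ℂ) σ = σ ⊗ₜ[ℂ] σ

/-- The twisted antipode `S_δ(h) = δ(h₍₁₎) S(h₍₂₎)` associated to a character `δ`. -/
def twistedAntipode (δ : H →ₐ[ℂ] ℂ) : H →ₗ[ℂ] H :=
  (TensorProduct.lid ℂ H).toLinearMap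
    ∘ₗ TensorProduct.map δ.toLinearMap (HopfAlgebra.antipode (R := ℂ))
    ∘ₗ Coalgebra.comul

/-- `(δ, σ)` is a modular pair in involution:  `δ(σ) = 1` and
`S_δ²(h) = σ h σ⁻¹` for all `h` (for a group-like `σ`, `σ⁻¹ = S(σ)`). -/
def IsModularPairInInvolution (δ : H →ₐ[ℂ] ℂ) (σ : H) : Prop :=
  δ σ = 1 ∧
    ∀ h : H, twistedAntipode δ (twistedAntipode δ h) =
      σ * h * HopfAlgebra.antipode (R := ℂ) σ

/-- Iterated comultiplication `h ↦ h₍₁₎ ⊗ (h₍₂₎ ⊗ h₍₃₎)`. -/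
def comul₂ : H →ₗ[ℂ] H ⊗[ℂ] (H ⊗[ℂ] H) :=
  LinearMap.lTensor H (Coalgebra.comul (R := ℂ)) ∘ₗ Coalgebra.comul

/-- The linear map `h ↦ Σ δ(h₍₂₎) • (S(h₍₃₎) * σ * h₍₁₎)`, i.e. the right-hand
side `S(h₍₃₎) m₍₋₁₎ h₍₁₎ ⊗ m₍₀₎ ◁ h₍₂₎` of the anti-Yetter-Drinfeld condition
for the module-comodule `^σℂ_δ` (identifying `H ⊗ ℂ ≅ H`). -/
def aydMap (δ : H →ₐ[ℂ] ℂ) (σ : H) : H →ₗ[ℂ] H :=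
  LinearMap.mul' ℂ H
    ∘ₗ TensorProduct.map (LinearMap.mulRight ℂ σ) LinearMap.id
    ∘ₗ (TensorProduct.comm ℂ H H).toLinearMap
    ∘ₗ LinearMap.lTensor H
        ((TensorProduct.lid ℂ H).toLinearMap
          ∘ₗ TensorProduct.map δ.toLinearMap (HopfAlgebra.antipode (R := ℂ)))
    ∘ₗ comul₂

/-- `^σℂ_δ` is a stable right-left anti-Yetter-Drinfeld module over `H`:
the AYD compatibility `∇(1 ◁ h) = S(h₍₃₎) σ h₍₁₎ ⊗ δ(h₍₂₎)` (as an identity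
in `H ⊗ ℂ ≅ H`) together with the stability condition `1 ◁ σ = 1`,
i.e. `δ(σ) = 1`. -/
def IsStableAntiYetterDrinfeld (δ : H →ₐ[ℂ] ℂ) (σ : H) : Prop :=
  δ σ = 1 ∧ ∀ h : H, aydMap δ σ h = δ h • σ

/-!
Write `S_δ = δ * S` in the convolution monoid of linear maps `H → H`; it is a unit there, since
both `δ` and `id` are, and `S_δ * id = δ`. Moreover `S_δ` is anti-multiplicative, and the
anti-Yetter-Drinfeld expression is `Σ S_δ(h₍₂₎) σ h₍₁₎`. If `S_δ² = σ (·) σ⁻¹`, then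
`σ h₍₁₎ = S_δ²(h₍₁₎) σ` and the expression collapses to `S_δ(S_δ(h₍₁₎) h₍₂₎) σ = δ(h) σ`.
Conversely, applying `S_δ` to the anti-Yetter-Drinfeld identity gives
`S_δ * (σ⁻¹ S_δ²(·) σ) = δ = S_δ * id`, and cancelling the unit `S_δ` gives `S_δ² = σ (·) σ⁻¹`.
-/

open Coalgebra HopfAlgebra WithConv

section Convolution

variable {R A B : Type*} [CommSemiring R] [Semiring A] [HopfAlgebra R A] [Semiring B]
  [Algebra R B]

lemma AlgHom.isUnit_toConv (f : A →ₐ[R] B) : IsUnit (toConv f.toLinearMap) := by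
  have hf : f.toLinearMap ∘ₗ (1 : WithConv (A →ₗ[R] A)).ofConv =
      (1 : WithConv (A →ₗ[R] B)).ofConv := by
    ext a; simp
  refine isUnit_iff_exists.mpr ⟨toConv (f.toLinearMap ∘ₗ antipode R), ?_, ?_⟩
  · have h := LinearMap.algHom_comp_convMul_distrib f (toConv LinearMap.id) (toConv (antipode R))
    rw [LinearMap.id_mul_antipode, hf] at h
    exact WithConv.ext h.symm
  · have h := LinearMap.algHom_comp_convMul_distrib f (toConv (antipode R)) (toConv LinearMap.id)
    rw [LinearMap.antipode_mul_id, hf] at h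
    exact WithConv.ext h.symm

lemma HopfAlgebra.isUnit_toConv_antipode : IsUnit (toConv (antipode R (A := A))) :=
  isUnit_iff_exists.mpr
    ⟨toConv LinearMap.id, LinearMap.antipode_mul_id, LinearMap.id_mul_antipode⟩

end Convolution

/-- `h ↦ δ(h₍₁₎) h₍₂₎` -/
def Bialgebra.twistAlgHom {R A : Type*} [CommSemiring R] [Semiring A] [Bialgebra R A]
    (δ : A →ₐ[R] R) : A →ₐ[R] A :=
  (Algebra.TensorProduct.lid R A).toAlgHom.comp
    ((Algebra.TensorProduct.map δ (AlgHom.id R A)).comp (Bialgebra.comulAlgHom R A))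

lemma Bialgebra.twistAlgHom_apply_of_isGroupLikeElem {R A : Type*} [CommSemiring R] [Semiring A]
    [Bialgebra R A] (δ : A →ₐ[R] R) {σ : A} (hσ : IsGroupLikeElem R σ) :
    twistAlgHom δ σ = δ σ • σ := by
  simp [twistAlgHom, hσ.comul_eq_tmul_self]

lemma IsGroupLike.isGroupLikeElem {σ : H} (hσ : IsGroupLike σ) : IsGroupLikeElem ℂ σ :=
  ⟨hσ.1, hσ.2⟩

section TwistedAntipode

variable (δ : H →ₐ[ℂ] ℂ)

lemma twistedAntipode_eq_antipode_comp :
    twistedAntipode δ = antipode ℂ ∘ₗ (Bialgebra.twistAlgHom δ).toLinearMap := by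
  ext h
  simp [twistedAntipode, Bialgebra.twistAlgHom, ← (ℛ ℂ h).eq]

lemma twistedAntipode_mul (a b : H) :
    twistedAntipode δ (a * b) = twistedAntipode δ b * twistedAntipode δ a := by
  simp [twistedAntipode_eq_antipode_comp, antipode_mul_antidistrib]

lemma twistedAntipode_one : twistedAntipode δ (1 : H) = 1 := by
  simp [twistedAntipode_eq_antipode_comp]

lemma twistedAntipode_of_isGroupLikeElem {σ : H} (hσ : IsGroupLikeElem ℂ σ) :
    twistedAntipode δ σ = δ σ • antipode ℂ σ := by
  simp [twistedAntipode_eq_antipode_comp, Bialgebra.twistAlgHom_apply_of_isGroupLikeElem δ hσ]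

lemma toConv_twistedAntipode :
    toConv (twistedAntipode δ) =
      toConv ((Algebra.ofId ℂ H).comp δ).toLinearMap * toConv (antipode ℂ) := by
  ext h
  simp [twistedAntipode, (ℛ ℂ h).convMul_apply, ← (ℛ ℂ h).eq, Algebra.smul_def]

lemma isUnit_toConv_twistedAntipode : IsUnit (toConv (twistedAntipode δ)) := by
  rw [toConv_twistedAntipode]
  exact (AlgHom.isUnit_toConv _).mul isUnit_toConv_antipode

lemma twistedAntipode_convMul_id :
    toConv (twistedAntipode δ) * toConv LinearMap.id =
      toConv ((Algebra.ofId ℂ H).comp δ).toLinearMap := by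
  rw [toConv_twistedAntipode, mul_assoc, LinearMap.antipode_mul_id, mul_one]

lemma sum_twistedAntipode_mul_eq_smul {a : H} {ι : Type*} (r : Repr ℂ a ι) :
    ∑ i ∈ r.index, twistedAntipode δ (r.left i) * r.right i = δ a • (1 : H) := by
  have h := r.convMul_apply (toConv (twistedAntipode δ)) (toConv LinearMap.id)
  rw [twistedAntipode_convMul_id] at h
  simpa [Algebra.smul_def] using h.symm

lemma aydMap_apply_eq_sum (σ : H) {a : H} {ι : Type*} (r : Repr ℂ a ι) :
    aydMap δ σ a = ∑ i ∈ r.index, twistedAntipode δ (r.right i) * σ * r.left i := by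
  simp [aydMap, comul₂, twistedAntipode, ← r.eq, mul_assoc]

end TwistedAntipode

section ModularPair

variable (δ : H →ₐ[ℂ] ℂ) {σ : H}

lemma aydMap_eq_smul_of_twistedAntipode_twistedAntipode (hσ : IsGroupLikeElem ℂ σ)
    (hinv : ∀ h, twistedAntipode δ (twistedAntipode δ h) = σ * h * antipode ℂ σ) (a : H) :
    aydMap δ σ a = δ a • σ := by
  have hconj (x : H) : σ * x = twistedAntipode δ (twistedAntipode δ x) * σ := by
    rw [hinv, mul_assoc, hσ.antipode_mul_cancel, mul_one]
  let r := ℛ ℂ a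
  calc aydMap δ σ a = ∑ i ∈ r.index, twistedAntipode δ (r.right i) * σ * r.left i :=
        aydMap_apply_eq_sum δ σ r
    _ = twistedAntipode δ (∑ i ∈ r.index, twistedAntipode δ (r.left i) * r.right i) * σ := by
        simp only [mul_assoc, hconj, map_sum, twistedAntipode_mul, Finset.sum_mul]
    _ = δ a • σ := by
        rw [sum_twistedAntipode_mul_eq_smul, map_smul, twistedAntipode_one, smul_one_mul]

lemma twistedAntipode_twistedAntipode_of_aydMap_eq_smul (hσ : IsGroupLikeElem ℂ σ)
    (hδσ : δ σ = 1) (hayd : ∀ a, aydMap δ σ a = δ a • σ) (a : H) :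
    twistedAntipode δ (twistedAntipode δ a) = σ * a * antipode ℂ σ := by
  let g : H →ₗ[ℂ] H := LinearMap.mulLeft ℂ (antipode ℂ σ) ∘ₗ
    LinearMap.mulRight ℂ σ ∘ₗ twistedAntipode δ ∘ₗ twistedAntipode δ
  have hSσ : twistedAntipode δ σ = antipode ℂ σ := by
    rw [twistedAntipode_of_isGroupLikeElem δ hσ, hδσ, one_smul]
  -- `S_δ * g = δ` is the anti-Yetter-Drinfeld identity with `S_δ` applied to both sides.
  have key : toConv (twistedAntipode δ) * toConv g =
      toConv (twistedAntipode δ) * toConv LinearMap.id := by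
    rw [twistedAntipode_convMul_id]
    ext x
    have h := congrArg (fun y => twistedAntipode δ y * σ) (hayd x)
    simp only [aydMap_apply_eq_sum δ σ (ℛ ℂ x), map_sum, twistedAntipode_mul, hSσ,
      Finset.sum_mul, mul_assoc, map_smul, smul_mul_assoc, hσ.antipode_mul_cancel] at h
    simpa [(ℛ ℂ x).convMul_apply, g, Algebra.algebraMap_eq_smul_one] using h
  have hg := congrArg (fun f => f a) ((isUnit_toConv_twistedAntipode δ).mul_left_cancel key)
  simp only [g, LinearMap.comp_apply, LinearMap.mulLeft_apply, LinearMap.mulRight_apply,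
    LinearMap.id_apply] at hg
  conv_rhs => rw [← hg]
  simp only [← mul_assoc, hσ.mul_antipode_cancel, one_mul]
  rw [mul_assoc, hσ.mul_antipode_cancel, mul_one]

end ModularPair

theorem sayd_iff_modular_pair_in_involution_general
    (δ : H →ₐ[ℂ] ℂ) (σ : H) (hσ : IsGroupLike σ) :
    IsStableAntiYetterDrinfeld δ σ ↔ IsModularPairInInvolution δ σ := by
  have hσ' := hσ.isGroupLikeElem
  constructor
  · rintro ⟨hδσ, hayd⟩
    exact ⟨hδσ, twistedAntipode_twistedAntipode_of_aydMap_eq_smul δ hσ' hδσ hayd⟩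
  · rintro ⟨hδσ, hinv⟩
    exact ⟨hδσ, aydMap_eq_smul_of_twistedAntipode_twistedAntipode δ hσ' hinv⟩

/-- For a Hopf algebra `H` with invertible antipode, a
character `δ` and a group-like `σ`, the module-comodule `^σℂ_δ` is a stable
right-left anti-Yetter-Drinfeld module over `H` iff `(δ, σ)` is a modular
pair in involution. -/
theorem sayd_iff_modular_pair_in_involution
    (hS : Function.Bijective (HopfAlgebra.antipode (R := ℂ) (A := H)))
    (δ : H →ₐ[ℂ] ℂ) (σ : H) (hσ : IsGroupLike σ) :
    IsStableAntiYetterDrinfeld δ σ ↔ IsModularPairInInvolution δ σ :=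
  sayd_iff_modular_pair_in_involution_general δ σ hσ

end
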